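/- arXiv:2411.01563 — 3 statements merged into one kernel-verified Lean document; each statement's English description precedes it below -/
import Mathlib

section
/- Let $D \subseteq \mathbb{R}^d$ be a bounded measurable set, $\beta \in (0,1]$, and $c_\beta, C_0, C_1 > 0$. Suppose $p_0 \colon D \to [0,\infty)$ satisfies $|p_0(x)-p_0(y)| \le c_\beta |x-y|^\beta$ for all $x,y \in D$, and for each $t \in (0,1]$ let $q_t \colon D \times D \to [0,\infty)$ be a symmetric probability transition kernel density satisfying the Gaussian bound $q_t(x,y) \le C_0 t^{-d/2} \exp(-C_1 |x-y|^2/t)$ for all $x,y \in D$. Define $p_t(x) = \int_D p_0(y) q_t(x,y)\,dy$. Then there is a constant $C$ depending only on $d, \beta, c_\beta, C_0, C_1$ and $\mathrm{Leb}(D)$ such that $\frac{1}{2}\int_D |p_t(x)-p_0(x)|\,dx \le C t^{\beta/2}$ for all $t \in (0,1]$. -/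
/-!
Since `∫_D q_t(x, ·) = 1`, the difference `p_t(x) - p_0(x)` is `∫_D (p_0 y - p_0 x) q_t(x, y) dy`.
Hölder continuity and the Gaussian bound dominate the integrand by
`c C₀ t^(-d/2) |x - y|^β exp(-C₁ |x - y|² / t)`, and `|x - y|^β` is absorbed into half of the
exponential at the price of a factor `t^(β/2)`. What remains is a Gaussian of width `√t`, whose
integral over all of `ℝ^d` cancels `t^(-d/2)`. So `|p_t - p_0| ≤ K t^(β/2)` uniformly on `D`,
and integrating over the bounded set `D` gives the claim.
-/

open MeasureTheory Set Real
open scoped NNReal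

lemma holderOnWith_of_dist_le {X Y : Type*} [PseudoMetricSpace X] [PseudoMetricSpace Y]
    {f : X → Y} {s : Set X} {C r : ℝ≥0}
    (h : ∀ x ∈ s, ∀ y ∈ s, dist (f x) (f y) ≤ C * dist x y ^ (r : ℝ)) :
    HolderOnWith C r f s := by
  intro x hx y hy
  have := ENNReal.ofReal_le_ofReal (h x hx y hy)
  rwa [ENNReal.ofReal_mul C.coe_nonneg, ENNReal.ofReal_coe_nnreal,
    ← ENNReal.ofReal_rpow_of_nonneg dist_nonneg r.coe_nonneg, ← edist_dist, ← edist_dist] at this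

lemma rpow_mul_exp_neg_mul_sq_le {a u β : ℝ} (ha : 0 < a) (hu : 0 ≤ u) (hβ0 : 0 ≤ β)
    (hβ1 : β ≤ 1) : u ^ β * exp (-a * u ^ 2) ≤ (2 + 2 / a) * exp (-(a / 2) * u ^ 2) := by
  have hpow : u ^ β ≤ 1 + u := by
    rcases le_or_gt u 1 with hu1 | hu1
    · linarith [rpow_le_one hu hu1 hβ0]
    · linarith [rpow_le_self_of_one_le hu1.le hβ1]
  set s := a / 2 * u ^ 2
  have hsq : u ^ 2 = 2 / a * s := by field_simp [s]; ring
  have hlin : 1 + u ≤ (2 + 2 / a) * exp s := by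
    have : 2 / a * s ≤ 2 / a * exp s := by gcongr; linarith [add_one_le_exp s]
    nlinarith [one_le_exp (show 0 ≤ s by positivity), sq_nonneg (u - 1)]
  calc u ^ β * exp (-a * u ^ 2)
      ≤ (1 + u) * exp (-s) * exp (-s) := by
        rw [mul_assoc, ← exp_add]
        gcongr
        exact le_of_eq (by ring)
    _ ≤ (2 + 2 / a) * exp s * exp (-s) * exp (-s) := by gcongr
    _ = (2 + 2 / a) * exp (-(a / 2) * u ^ 2) := by
        rw [mul_assoc _ (exp s), ← exp_add]; simp [s]

lemma rpow_mul_exp_neg_mul_sq_div_le {a r t β : ℝ} (ha : 0 < a) (hr : 0 ≤ r) (ht : 0 < t)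
    (hβ0 : 0 ≤ β) (hβ1 : β ≤ 1) :
    r ^ β * exp (-a * r ^ 2 / t) ≤ (2 + 2 / a) * t ^ (β / 2) * exp (-(a / (2 * t)) * r ^ 2) := by
  have hsqrt : 0 < √t := sqrt_pos.2 ht
  set u := r / √t
  have hr_eq : r = √t * u := by simp only [u]; field_simp
  have hu_sq : u ^ 2 = r ^ 2 / t := by rw [div_pow, sq_sqrt ht.le]
  have hrpow : r ^ β = t ^ (β / 2) * u ^ β := by
    rw [hr_eq, mul_rpow hsqrt.le (by positivity), sqrt_eq_rpow, ← rpow_mul ht.le,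
      one_div_mul_eq_div]
  have key := rpow_mul_exp_neg_mul_sq_le ha (by positivity : 0 ≤ u) hβ0 hβ1
  rw [hu_sq] at key
  calc r ^ β * exp (-a * r ^ 2 / t) = t ^ (β / 2) * (u ^ β * exp (-a * (r ^ 2 / t))) := by
        rw [hrpow, mul_div_assoc]; ring
    _ ≤ t ^ (β / 2) * ((2 + 2 / a) * exp (-(a / 2) * (r ^ 2 / t))) := by gcongr
    _ = (2 + 2 / a) * t ^ (β / 2) * exp (-(a / (2 * t)) * r ^ 2) := by
        field_simp

lemma abs_integral_mul_sub_le {α : Type*} [MeasurableSpace α] {μ : Measure α} {f k g : α → ℝ}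
    {a : ℝ} (hk : ∫ y, k y ∂μ = 1) (hf : AEStronglyMeasurable f μ) (hg : Integrable g μ)
    (hbound : ∀ᵐ y ∂μ, |(f y - a) * k y| ≤ g y) :
    |∫ y, f y * k y ∂μ - a| ≤ ∫ y, g y ∂μ := by
  -- a non-integrable `k` would have integral `0`
  have hk_int : Integrable k μ := by
    by_contra h
    rw [integral_undef h] at hk
    exact zero_ne_one hk
  have hdiff_int : Integrable (fun y => (f y - a) * k y) μ :=
    hg.mono' ((hf.sub aestronglyMeasurable_const).mul hk_int.aestronglyMeasurable) hbound
  have hdiff : ∫ y, f y * k y ∂μ - a = ∫ y, (f y - a) * k y ∂μ := by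
    have hfk_int : Integrable (fun y => f y * k y) μ :=
      (hdiff_int.add (hk_int.const_mul a)).congr
        (ae_of_all _ fun y => by simp only [Pi.add_apply]; ring)
    simp_rw [sub_mul]
    rw [integral_sub hfk_int (hk_int.const_mul a), integral_const_mul, hk, mul_one]
  rw [hdiff]
  exact norm_integral_le_of_norm_le (f := fun y => (f y - a) * k y) hg hbound

section Gaussian

variable {V : Type*} [NormedAddCommGroup V] [InnerProductSpace ℝ V] [FiniteDimensional ℝ V]
  [MeasurableSpace V] [BorelSpace V]

lemma integrable_exp_neg_mul_sq_norm_sub {b : ℝ} (hb : 0 < b) (x : V) :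
    Integrable (fun y : V => exp (-b * ‖x - y‖ ^ 2)) := by
  have h := (GaussianFourier.integrable_cexp_neg_mul_sq_norm_add (V := V)
    (b := (b : ℂ)) (by simpa using hb) 0 0).norm
  refine (integrable_comp_sub_left (fun z : V => exp (-b * ‖z‖ ^ 2)) x).2 ?_
  refine h.congr (Filter.Eventually.of_forall fun v => ?_)
  simp [Complex.norm_exp, ← Complex.ofReal_pow]

lemma integral_exp_neg_mul_sq_norm_sub {b : ℝ} (hb : 0 < b) (x : V) :
    ∫ y : V, exp (-b * ‖x - y‖ ^ 2) = (π / b) ^ ((Module.finrank ℝ V : ℝ) / 2) := by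
  rw [integral_sub_left_eq_self (fun z : V => exp (-b * ‖z‖ ^ 2)),
    GaussianFourier.integral_rexp_neg_mul_sq_norm hb]

lemma abs_setIntegral_mul_sub_le_of_gaussian_bound {D : Set V} (hDm : MeasurableSet D)
    {f k : V → ℝ} {x : V} {β c C0 C1 t : ℝ}
    (hβ0 : 0 ≤ β) (hβ1 : β ≤ 1) (hc : 0 ≤ c) (hC0 : 0 ≤ C0) (hC1 : 0 < C1) (ht : 0 < t)
    (hf : AEStronglyMeasurable f (volume.restrict D))
    (hfx : ∀ y ∈ D, |f y - f x| ≤ c * ‖x - y‖ ^ β)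
    (hk0 : ∀ y ∈ D, 0 ≤ k y) (hk1 : ∫ y in D, k y = 1)
    (hk : ∀ y ∈ D,
      k y ≤ C0 * t ^ (-(Module.finrank ℝ V : ℝ) / 2) * exp (-C1 * ‖x - y‖ ^ 2 / t)) :
    |(∫ y in D, f y * k y) - f x| ≤
      c * C0 * (2 + 2 / C1) * (2 * π / C1) ^ ((Module.finrank ℝ V : ℝ) / 2) * t ^ (β / 2) := by
  set n : ℝ := (Module.finrank ℝ V : ℝ)
  set b := C1 / (2 * t)
  set L := c * C0 * t ^ (-n / 2) * ((2 + 2 / C1) * t ^ (β / 2))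
  have hG := (integrable_exp_neg_mul_sq_norm_sub (by positivity : 0 < b) x).const_mul L
  have hbound : ∀ y ∈ D, |(f y - f x) * k y| ≤ L * exp (-b * ‖x - y‖ ^ 2) := by
    intro y hy
    rw [abs_mul, abs_of_nonneg (hk0 y hy)]
    calc |f y - f x| * k y
        ≤ c * ‖x - y‖ ^ β * (C0 * t ^ (-n / 2) * exp (-C1 * ‖x - y‖ ^ 2 / t)) :=
          mul_le_mul (hfx y hy) (hk y hy) (hk0 y hy) (by positivity)
      _ = c * C0 * t ^ (-n / 2) * (‖x - y‖ ^ β * exp (-C1 * ‖x - y‖ ^ 2 / t)) := by ring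
      _ ≤ c * C0 * t ^ (-n / 2) * ((2 + 2 / C1) * t ^ (β / 2) * exp (-b * ‖x - y‖ ^ 2)) := by
          have := rpow_mul_exp_neg_mul_sq_div_le hC1 (norm_nonneg (x - y)) ht hβ0 hβ1
          exact mul_le_mul_of_nonneg_left this (by positivity)
      _ = L * exp (-b * ‖x - y‖ ^ 2) := by ring
  have htt : t ^ (-n / 2) * t ^ (n / 2) = 1 := by
    rw [← rpow_add ht, neg_div, neg_add_cancel, rpow_zero]
  calc |(∫ y in D, f y * k y) - f x|
      ≤ ∫ y in D, L * exp (-b * ‖x - y‖ ^ 2) :=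
        abs_integral_mul_sub_le hk1 hf hG.integrableOn (ae_restrict_of_forall_mem hDm hbound)
    _ ≤ ∫ y, L * exp (-b * ‖x - y‖ ^ 2) :=
        setIntegral_le_integral hG (ae_of_all _ fun y => by positivity)
    _ = L * ((2 * π / C1) ^ (n / 2) * t ^ (n / 2)) := by
        rw [integral_const_mul, integral_exp_neg_mul_sq_norm_sub (by positivity),
          ← mul_rpow (by positivity) ht.le]
        congr 2
        simp only [b]
        field_simp
    _ = c * C0 * (2 + 2 / C1) * (2 * π / C1) ^ (n / 2) * t ^ (β / 2) := by
        linear_combination (c * C0 * (2 + 2 / C1) * (2 * π / C1) ^ (n / 2) * t ^ (β / 2)) * htt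
end Gaussian

theorem early_stopping_tv_bound_general
    (d : ℕ) (D : Set (EuclideanSpace ℝ (Fin d)))
    (hDb : Bornology.IsBounded D) (hDm : MeasurableSet D)
    (β c C0 C1 : ℝ) (hβ : β ∈ Set.Ioc (0:ℝ) 1) (hc : 0 < c) (hC0 : 0 < C0) (hC1 : 0 < C1)
    (p0 : EuclideanSpace ℝ (Fin d) → ℝ)
    (hHolder : ∀ x ∈ D, ∀ y ∈ D, |p0 x - p0 y| ≤ c * ‖x - y‖ ^ β)
    (q : ℝ → EuclideanSpace ℝ (Fin d) → EuclideanSpace ℝ (Fin d) → ℝ)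
    (hqnn : ∀ t ∈ Set.Ioc (0:ℝ) 1, ∀ x ∈ D, ∀ y ∈ D, 0 ≤ q t x y)
    (hqprob : ∀ t ∈ Set.Ioc (0:ℝ) 1, ∀ x ∈ D, ∫ y in D, q t x y = 1)
    (hqgauss : ∀ t ∈ Set.Ioc (0:ℝ) 1, ∀ x ∈ D, ∀ y ∈ D,
      q t x y ≤ C0 * t ^ (-(d : ℝ) / 2) * Real.exp (-C1 * ‖x - y‖ ^ 2 / t)) :
    ∃ C : ℝ, 0 < C ∧ ∀ t ∈ Set.Ioc (0:ℝ) 1,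
      (1 / 2) * ∫ x in D, |(∫ y in D, p0 y * q t x y) - p0 x| ≤ C * t ^ (β / 2) := by
  obtain ⟨hβ0, hβ1⟩ := hβ
  have hp0 : ContinuousOn p0 D :=
    (holderOnWith_of_dist_le (C := ⟨c, hc.le⟩) (r := ⟨β, hβ0.le⟩) fun x hx y hy => by
      rw [Real.dist_eq, dist_eq_norm]; exact hHolder x hx y hy).continuousOn hβ0
  set K := c * C0 * (2 + 2 / C1) * (2 * π / C1) ^ ((d : ℝ) / 2)
  refine ⟨volume.real D * K + 1, by positivity, fun t ht => ?_⟩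
  have hpointwise : ∀ x ∈ D, ‖|(∫ y in D, p0 y * q t x y) - p0 x|‖ ≤ K * t ^ (β / 2) := by
    intro x hx
    rw [Real.norm_eq_abs, abs_abs]
    simpa only [finrank_euclideanSpace_fin] using
      abs_setIntegral_mul_sub_le_of_gaussian_bound hDm hβ0.le hβ1 hc.le hC0.le hC1 ht.1
        (hp0.aestronglyMeasurable hDm) (fun y hy => by rw [abs_sub_comm]; exact hHolder x hx y hy)
        (hqnn t ht x hx) (hqprob t ht x hx)
        (by simpa only [finrank_euclideanSpace_fin] using hqgauss t ht x hx)
  have hintegral := (le_abs_self _).trans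
    (norm_setIntegral_le_of_norm_le_const (hDb.measure_lt_top (μ := volume)) hpointwise)
  have hnonneg : 0 ≤ ∫ x in D, |(∫ y in D, p0 y * q t x y) - p0 x| :=
    integral_nonneg fun _ => abs_nonneg _
  have htβ : 0 ≤ t ^ (β / 2) := rpow_nonneg ht.1.le _
  nlinarith [mul_nonneg (measureReal_nonneg (μ := volume) (s := D)) (by positivity : 0 ≤ K)]

/-- Early-stopping total variation bound: if `p0` is `β`-Hölder on a bounded
measurable set `D` and `q t` is a symmetric probability transition kernel density
on `D` satisfying a Gaussian upper bound, then the total variation distance between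
`p_t = ∫ p0 y * q t x y dy` and `p0` is bounded by `C * t^(β/2)`. -/
theorem early_stopping_tv_bound
    (d : ℕ) (D : Set (EuclideanSpace ℝ (Fin d)))
    (hDb : Bornology.IsBounded D) (hDm : MeasurableSet D)
    (β c C0 C1 : ℝ) (hβ : β ∈ Set.Ioc (0:ℝ) 1) (hc : 0 < c) (hC0 : 0 < C0) (hC1 : 0 < C1)
    (p0 : EuclideanSpace ℝ (Fin d) → ℝ)
    (hp0nn : ∀ x ∈ D, 0 ≤ p0 x)
    (hHolder : ∀ x ∈ D, ∀ y ∈ D, |p0 x - p0 y| ≤ c * ‖x - y‖ ^ β)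
    (q : ℝ → EuclideanSpace ℝ (Fin d) → EuclideanSpace ℝ (Fin d) → ℝ)
    (hqnn : ∀ t ∈ Set.Ioc (0:ℝ) 1, ∀ x ∈ D, ∀ y ∈ D, 0 ≤ q t x y)
    (hqsym : ∀ t ∈ Set.Ioc (0:ℝ) 1, ∀ x ∈ D, ∀ y ∈ D, q t x y = q t y x)
    (hqprob : ∀ t ∈ Set.Ioc (0:ℝ) 1, ∀ x ∈ D, ∫ y in D, q t x y = 1)
    (hqgauss : ∀ t ∈ Set.Ioc (0:ℝ) 1, ∀ x ∈ D, ∀ y ∈ D,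
      q t x y ≤ C0 * t ^ (-(d : ℝ) / 2) * Real.exp (-C1 * ‖x - y‖ ^ 2 / t)) :
    ∃ C : ℝ, 0 < C ∧ ∀ t ∈ Set.Ioc (0:ℝ) 1,
      (1 / 2) * ∫ x in D, |(∫ y in D, p0 y * q t x y) - p0 x| ≤ C * t ^ (β / 2) :=
  early_stopping_tv_bound_general d D hDb hDm β c C0 C1 hβ hc hC0 hC1 p0 hHolder q hqnn hqprob
    hqgauss
end

section
/- For every $C \ge 1$ and $m \in \mathbb{N}$, there exists a ReLU neural network $\varphi \colon \mathbb{R}^2 \to \mathbb{R}$ with at most $m + 8$ hidden layers, all layer widths at most $12$, at most $58 + 16m$ nonzero parameters, all parameters bounded in absolute value by $C$, such that $|\varphi(x,y) - xy| \le C 2^{-m}$ for all $x \in [0,1]$ and $y \in [-C, C]$, and moreover $\varphi(0,y) = \varphi(x,0) = 0$ for all $x, y$. -/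
open scoped Classical
open Matrix

/-- A feedforward ReLU neural network `A_L σ_{b_L} A_{L-1} ⋯ A_1 σ_{b_1} A_0` with
`L` hidden layers, layer widths `width 0, …, width (L+1)` (input and output included),
weight matrices `A i` for `i = 0, …, L` and shift vectors `b i` (the paper's `b_{i+1}`)
for `i = 0, …, L-1`. -/
structure ReluNet (din dout : ℕ) where
  L : ℕ
  width : ℕ → ℕ
  hin : width 0 = din
  hout : width (L + 1) = dout
  A : (i : ℕ) → Matrix (Fin (width (i + 1))) (Fin (width i)) ℝ
  b : (i : ℕ) → Fin (width (i + 1)) → ℝ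

namespace ReluNet

variable {din dout : ℕ}

/-- The value of the network at layer `i`, starting from input `x`:
`forward x 0 = x`, `forward x 1 = A 0 x`, and
`forward x (i+2) = A (i+1) (σ_{b i}(forward x (i+1)))` where `σ_b(v)_j = max (v_j - b_j) 0`. -/
def forward (net : ReluNet din dout) (x : Fin (net.width 0) → ℝ) :
    (i : ℕ) → Fin (net.width i) → ℝ
  | 0 => x
  | 1 => net.A 0 *ᵥ x
  | (i + 2) => net.A (i + 1) *ᵥ fun j => max (net.forward x (i + 1) j - net.b i j) 0

/-- The function computed by the network. -/
def eval (net : ReluNet din dout) (x : Fin din → ℝ) : Fin dout → ℝ :=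
  fun j => net.forward (fun k => x (Fin.cast net.hin k)) (net.L + 1) (Fin.cast net.hout.symm j)

/-- The sparsity of the network: total number of nonzero entries of the `A i`'s
and `b i`'s. -/
noncomputable def sparsity (net : ReluNet din dout) : ℕ :=
  (∑ i ∈ Finset.range (net.L + 1),
      (Finset.univ.filter fun p : Fin (net.width (i + 1)) × Fin (net.width i) =>
        net.A i p.1 p.2 ≠ 0).card)
    + ∑ i ∈ Finset.range net.L,
        (Finset.univ.filter fun j : Fin (net.width (i + 1)) => net.b i j ≠ 0).card

/-- All parameters of the network are bounded by `B` in absolute value. -/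
def paramBound (net : ReluNet din dout) (B : ℝ) : Prop :=
  (∀ i, i ≤ net.L → ∀ j k, |net.A i j k| ≤ B) ∧
    (∀ i, i < net.L → ∀ j, |net.b i j| ≤ B)

end ReluNet

/-!
On `[0, 1]` the function `f u = 2u - u²` is the sum of the series `∑ⱼ tent^[j] u / 4ʲ`, and
its partial sum with `K + 1` terms is within `4^{-(K+1)}` of `f u`; each term is obtained from the
previous one by two ReLU units, while one more unit carries the running sum. With `a = x / 2`,
`p = y⁺ / (2C)` and `q = y⁻ / (2C)`, all in `[0, 1/2]`, polarization gives
`x y = 2C (f (a + q) + f p - f (a + p) - f q)`, so four sawtooth channels and two running sums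
compute `x y` up to `C 4^{-K}` with `K + 3` hidden layers of width `10` and `26 K + 31` nonzero
parameters; take `K = ⌈m / 2⌉`. For `x = 0` or `y = 0` the two running sums coincide, so the
network vanishes exactly there.
-/

open Finset

noncomputable section

def tent (u : ℝ) : ℝ := 2 * u - 4 * max (u - 1 / 2) 0

lemma tent_mem_Icc {u : ℝ} (hu : u ∈ Set.Icc (0 : ℝ) 1) : tent u ∈ Set.Icc (0 : ℝ) 1 := by
  obtain ⟨h0, h1⟩ := hu
  unfold tent
  rcases le_total (u - 1 / 2) 0 with h | h
  · rw [max_eq_right h]; constructor <;> linarith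
  · rw [max_eq_left h]; constructor <;> linarith

lemma two_mul_tent_sub_sq (u : ℝ) : 2 * tent u - tent u ^ 2 = 4 * (u - u ^ 2) := by
  unfold tent
  rcases le_total (u - 1 / 2) 0 with h | h
  · rw [max_eq_right h]; ring
  · rw [max_eq_left h]; ring

/-- `tent^[j] u / 4 ^ j` on `[0, 1]` (`sawtooth_succ`), written as computed by two ReLU units
with shifts `0` and `4⁻ʲ / 2`. -/
def sawtooth : ℕ → ℝ → ℝ
  | 0, u => u
  | j + 1, u => max (sawtooth j u) 0 / 2 - max (sawtooth j u - (1 / 4) ^ j / 2) 0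

lemma sawtooth_succ (j : ℕ) {u : ℝ} (hu : 0 ≤ u) :
    sawtooth (j + 1) u = sawtooth j (tent u) / 4 := by
  induction j with
  | zero =>
    simp only [sawtooth, tent, max_eq_left hu]
    rcases le_total (u - 1 / 2) 0 with h | h
    · rw [max_eq_right h, max_eq_right (by linarith)]; ring
    · rw [max_eq_left h, max_eq_left (by linarith)]; ring
  | succ j ih =>
    have hshift : sawtooth j (tent u) / 4 - (1 / 4) ^ (j + 1) / 2
        = (sawtooth j (tent u) - (1 / 4) ^ j / 2) / 4 := by ring
    have hquarter (a : ℝ) : max (a / 4) 0 = max a 0 / 4 := by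
      rw [← max_div_div_right (by norm_num), zero_div]
    rw [sawtooth, ih, hshift, hquarter, hquarter, sawtooth]
    ring

lemma sawtooth_mem_Icc (j : ℕ) {u : ℝ} (hu : u ∈ Set.Icc (0 : ℝ) 1) :
    sawtooth j u ∈ Set.Icc (0 : ℝ) 1 := by
  induction j generalizing u with
  | zero => exact hu
  | succ j ih =>
    rw [sawtooth_succ j hu.1]
    obtain ⟨h0, h1⟩ := ih (tent_mem_Icc hu)
    constructor <;> linarith

lemma sum_sawtooth_mem_Icc (K : ℕ) {u : ℝ} (hu : u ∈ Set.Icc (0 : ℝ) 1) :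
    ∑ i ∈ range (K + 1), sawtooth i u
      ∈ Set.Icc (2 * u - u ^ 2 - (1 / 4) ^ (K + 1)) (2 * u - u ^ 2) := by
  induction K generalizing u with
  | zero =>
    obtain ⟨h0, h1⟩ := hu
    simp only [zero_add, sum_range_one, sawtooth]
    constructor <;> nlinarith [sq_nonneg (u - 1 / 2)]
  | succ K ih =>
    have hsum : ∑ i ∈ range (K + 1 + 1), sawtooth i u
        = u + (∑ i ∈ range (K + 1), sawtooth i (tent u)) / 4 := by
      rw [sum_range_succ', sum_div, add_comm]
      exact congrArg _ (sum_congr rfl fun i _ => sawtooth_succ i hu.1)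
    obtain ⟨h0, h1⟩ := ih (tent_mem_Icc hu)
    have := two_mul_tent_sub_sq u
    rw [hsum, pow_succ (1 / 4 : ℝ) (K + 1)]
    constructor <;> linarith

/-- `C · ∑_{i<j} (sawtooth i a + sawtooth i b)` on `[0, 1]` (`sawtoothAccum_eq_sum`), written as
computed by a ReLU unit. -/
def sawtoothAccum (C a b : ℝ) : ℕ → ℝ
  | 0 => 0
  | j + 1 => max (sawtoothAccum C a b j) 0 + C * max (sawtooth j a) 0 + C * max (sawtooth j b) 0

lemma sawtoothAccum_comm (C a b : ℝ) (j : ℕ) :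
    sawtoothAccum C a b j = sawtoothAccum C b a j := by
  induction j with
  | zero => rfl
  | succ j ih => simp only [sawtoothAccum, ih]; ring

lemma sawtoothAccum_eq_sum {C a b : ℝ} (hC : 0 ≤ C) (ha : a ∈ Set.Icc (0 : ℝ) 1)
    (hb : b ∈ Set.Icc (0 : ℝ) 1) (j : ℕ) :
    sawtoothAccum C a b j = C * ∑ i ∈ range j, (sawtooth i a + sawtooth i b) := by
  induction j with
  | zero => simp [sawtoothAccum]
  | succ j ih =>
    have hsum : 0 ≤ ∑ i ∈ range j, (sawtooth i a + sawtooth i b) := sum_nonneg fun i _ =>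
      add_nonneg (sawtooth_mem_Icc i ha).1 (sawtooth_mem_Icc i hb).1
    rw [sawtoothAccum, ih, max_eq_left (mul_nonneg hC hsum),
      max_eq_left (sawtooth_mem_Icc j ha).1, max_eq_left (sawtooth_mem_Icc j hb).1, sum_range_succ]
    ring

lemma sawtoothAccum_nonneg {C : ℝ} (hC : 0 ≤ C) (a b : ℝ) (j : ℕ) :
    0 ≤ sawtoothAccum C a b j := by
  cases j with
  | zero => exact le_rfl
  | succ j => unfold sawtoothAccum; positivity

/-- Polarization: `f u = 2u - u²` satisfies `f (a + q) + f p - f (a + p) - f q = 2 a (p - q)`. -/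
lemma abs_two_mul_sawtoothAccum_sub_le {C a p q : ℝ} (hC : 0 ≤ C)
    (hap : a + p ∈ Set.Icc (0 : ℝ) 1) (haq : a + q ∈ Set.Icc (0 : ℝ) 1)
    (hp : p ∈ Set.Icc (0 : ℝ) 1) (hq : q ∈ Set.Icc (0 : ℝ) 1) (K : ℕ) :
    |2 * sawtoothAccum C (a + q) p (K + 1) - 2 * sawtoothAccum C (a + p) q (K + 1)
        - 4 * C * a * (p - q)| ≤ C * (1 / 4) ^ K := by
  rw [sawtoothAccum_eq_sum hC haq hp, sawtoothAccum_eq_sum hC hap hq, sum_add_distrib,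
    sum_add_distrib]
  obtain ⟨h1, h1'⟩ := sum_sawtooth_mem_Icc K haq
  obtain ⟨h2, h2'⟩ := sum_sawtooth_mem_Icc K hp
  obtain ⟨h3, h3'⟩ := sum_sawtooth_mem_Icc K hap
  obtain ⟨h4, h4'⟩ := sum_sawtooth_mem_Icc K hq
  set S := fun u => ∑ i ∈ range (K + 1), sawtooth i u
  set f := fun u : ℝ => 2 * u - u ^ 2
  set δ : ℝ := (1 / 4) ^ (K + 1)
  have hsplit : 2 * (C * (S (a + q) + S p)) - 2 * (C * (S (a + p) + S q)) - 4 * C * a * (p - q)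
      = 2 * C * ((S (a + q) - f (a + q)) + (S p - f p) - (S (a + p) - f (a + p))
          - (S q - f q)) := by
    simp only [f]; ring
  rw [hsplit, abs_mul, abs_of_nonneg (by positivity)]
  calc 2 * C * |(S (a + q) - f (a + q)) + (S p - f p) - (S (a + p) - f (a + p)) - (S q - f q)|
      ≤ 2 * C * (2 * δ) := by gcongr; rw [abs_le]; constructor <;> linarith
    _ = C * (1 / 4) ^ K := by simp only [δ]; ring

section Sparse

variable {ι : Type*} [DecidableEq ι]

def sparse (l : List (ι × ℝ)) (p : ι) : ℝ :=
  (l.map fun e => if e.1 = p then e.2 else 0).sum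

@[simp] lemma sparse_nil (p : ι) : sparse [] p = 0 := rfl

@[simp] lemma sparse_cons (e : ι × ℝ) (l : List (ι × ℝ)) (p : ι) :
    sparse (e :: l) p = (if e.1 = p then e.2 else 0) + sparse l p := rfl

lemma sparse_eq_zero_of_notMem {l : List (ι × ℝ)} {p : ι} (hp : p ∉ l.map Prod.fst) :
    sparse l p = 0 := by
  induction l with
  | nil => rfl
  | cons e l ih =>
    simp only [List.map_cons, List.mem_cons, not_or] at hp
    rw [sparse_cons, if_neg (Ne.symm hp.1), ih hp.2, zero_add]

lemma abs_sparse_le {l : List (ι × ℝ)} {B : ℝ} (hB : 0 ≤ B) (hl : (l.map Prod.fst).Nodup)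
    (hbound : ∀ e ∈ l, |e.2| ≤ B) (p : ι) : |sparse l p| ≤ B := by
  induction l with
  | nil => simpa using hB
  | cons e l ih =>
    rw [List.map_cons, List.nodup_cons] at hl
    rw [sparse_cons]
    split_ifs with he
    · rw [sparse_eq_zero_of_notMem (he ▸ hl.1), add_zero]
      exact hbound e List.mem_cons_self
    · rw [zero_add]
      exact ih hl.2 fun e' he' => hbound e' (List.mem_cons_of_mem e he')

lemma card_sparse_ne_zero_le {α : Type*} [Fintype α] {f : α → ι} (hf : Function.Injective f)
    (l : List (ι × ℝ)) : #{a | sparse l (f a) ≠ 0} ≤ l.length := by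
  calc #{a | sparse l (f a) ≠ 0} ≤ (l.map Prod.fst).toFinset.card := by
        refine card_le_card_of_injOn f (fun a ha => ?_) hf.injOn
        rw [coe_filter, Set.mem_ofPred_eq] at ha
        rw [mem_coe, List.mem_toFinset]
        by_contra h
        exact ha.2 (sparse_eq_zero_of_notMem h)
    _ ≤ l.length := (List.toFinset_card_le _).trans (List.length_map _).le

end Sparse

def sparseMulVec (l : List ((ℕ × ℕ) × ℝ)) (v : ℕ → ℝ) (r : ℕ) : ℝ :=
  (l.map fun e => if e.1.1 = r then e.2 * v e.1.2 else 0).sum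

lemma sum_sparse_mul {l : List ((ℕ × ℕ) × ℝ)} {m : ℕ} (hl : ∀ e ∈ l, e.1.2 < m) (v : ℕ → ℝ)
    (r : ℕ) : ∑ c : Fin m, sparse l (r, c) * v c = sparseMulVec l v r := by
  induction l with
  | nil => simp [sparseMulVec]
  | cons e l ih =>
    have hsingle : ∑ c : Fin m, (if e.1 = (r, c.val) then e.2 else 0) * v c
        = if e.1.1 = r then e.2 * v e.1.2 else 0 := by
      rw [Fin.sum_univ_eq_sum_range (fun c => (if e.1 = (r, c) then e.2 else 0) * v c)]
      split_ifs with hr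
      · simp_rw [Prod.ext_iff, hr, true_and, ite_mul, zero_mul]
        rw [sum_ite_eq, if_pos (mem_range.2 (hl e List.mem_cons_self))]
      · simp [Prod.ext_iff, hr]
    simp only [sparse_cons, add_mul, sum_add_distrib, hsingle,
      ih fun e' he' => hl e' (List.mem_cons_of_mem e he')]
    simp [sparseMulVec]

namespace ReluNet

variable {din dout : ℕ}

/-- The network whose layers are given by lists of their nonzero entries, indexed by `ℕ` so that
they can be written down independently of the widths. -/
def ofSparse (L : ℕ) (width : ℕ → ℕ) (hin : width 0 = din) (hout : width (L + 1) = dout)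
    (A : ℕ → List ((ℕ × ℕ) × ℝ)) (b : ℕ → List (ℕ × ℝ)) : ReluNet din dout where
  L := L
  width := width
  hin := hin
  hout := hout
  A i := Matrix.of fun r c => sparse (A i) (r.val, c.val)
  b i r := sparse (b i) r.val

section OfSparse

variable {L : ℕ} {width : ℕ → ℕ} {hin : width 0 = din} {hout : width (L + 1) = dout}
  {A : ℕ → List ((ℕ × ℕ) × ℝ)} {b : ℕ → List (ℕ × ℝ)}

lemma forward_ofSparse_one {x : Fin (width 0) → ℝ} {v : ℕ → ℝ} (hv : ∀ c, x c = v c)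
    (hA : ∀ e ∈ A 0, e.1.2 < width 0) (r : Fin (width 1)) :
    (ofSparse L width hin hout A b).forward x 1 r = sparseMulVec (A 0) v r := by
  simp only [forward, ofSparse, Matrix.mulVec, dotProduct, Matrix.of_apply, hv]
  exact sum_sparse_mul hA v r

lemma forward_ofSparse_add_two {x : Fin (width 0) → ℝ} {i : ℕ} {v : ℕ → ℝ}
    (hv : ∀ c, (ofSparse L width hin hout A b).forward x (i + 1) c = v c)
    (hA : ∀ e ∈ A (i + 1), e.1.2 < width (i + 1)) (r : Fin (width (i + 2))) :
    (ofSparse L width hin hout A b).forward x (i + 2) r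
      = sparseMulVec (A (i + 1)) (fun c => max (v c - sparse (b i) c) 0) r := by
  simp only [forward, Matrix.mulVec, dotProduct, hv]
  exact sum_sparse_mul hA (fun c => max (v c - sparse (b i) c) 0) r

lemma sparsity_ofSparse_le : (ofSparse L width hin hout A b).sparsity
    ≤ ∑ i ∈ range (L + 1), (A i).length + ∑ i ∈ range L, (b i).length := by
  refine add_le_add (sum_le_sum fun i _ => ?_) (sum_le_sum fun i _ => ?_)
  · exact card_sparse_ne_zero_le (f := fun p : Fin _ × Fin _ => (p.1.val, p.2.val))
      (fun p q h => Prod.ext (Fin.ext (Prod.ext_iff.1 h).1) (Fin.ext (Prod.ext_iff.1 h).2)) _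
  · exact card_sparse_ne_zero_le Fin.val_injective _

lemma paramBound_ofSparse {B : ℝ} (hB : 0 ≤ B)
    (hA : ∀ i ≤ L, ((A i).map Prod.fst).Nodup ∧ ∀ e ∈ A i, |e.2| ≤ B)
    (hb : ∀ i < L, ((b i).map Prod.fst).Nodup ∧ ∀ e ∈ b i, |e.2| ≤ B) :
    (ofSparse L width hin hout A b).paramBound B :=
  ⟨fun i hi _ _ => abs_sparse_le hB (hA i hi).1 (hA i hi).2 _,
    fun i hi _ => abs_sparse_le hB (hb i hi).1 (hb i hi).2 _⟩

end OfSparse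

end ReluNet

def inputWeights : List ((ℕ × ℕ) × ℝ) := [((0, 0), 1), ((1, 1), 1), ((2, 1), -1)]

def splitWeights (C : ℝ) : List ((ℕ × ℕ) × ℝ) :=
  [((0, 0), 1 / 2), ((1, 0), 1 / 2), ((2, 0), 1 / 2), ((3, 0), 1 / 2),
   ((0, 1), (2 * C)⁻¹), ((1, 1), (2 * C)⁻¹), ((4, 1), (2 * C)⁻¹), ((5, 1), (2 * C)⁻¹),
   ((2, 2), (2 * C)⁻¹), ((3, 2), (2 * C)⁻¹), ((6, 2), (2 * C)⁻¹), ((7, 2), (2 * C)⁻¹)]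

def tentWeights (C : ℝ) : List ((ℕ × ℕ) × ℝ) :=
  [((0, 0), 1 / 2), ((0, 1), -1), ((1, 0), 1 / 2), ((1, 1), -1),
   ((2, 2), 1 / 2), ((2, 3), -1), ((3, 2), 1 / 2), ((3, 3), -1),
   ((4, 4), 1 / 2), ((4, 5), -1), ((5, 4), 1 / 2), ((5, 5), -1),
   ((6, 6), 1 / 2), ((6, 7), -1), ((7, 6), 1 / 2), ((7, 7), -1),
   ((8, 8), 1), ((8, 2), C), ((8, 4), C), ((9, 9), 1), ((9, 0), C), ((9, 6), C)]

def tentBias (j : ℕ) : List (ℕ × ℝ) :=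
  [(1, (1 / 4) ^ j / 2), (3, (1 / 4) ^ j / 2), (5, (1 / 4) ^ j / 2), (7, (1 / 4) ^ j / 2)]

/-- Weights are bounded by `C`, which may be less than `2`, so the factor `2` of the
output is obtained by duplicating the running sums. -/
def readoutWeights (C : ℝ) : List ((ℕ × ℕ) × ℝ) :=
  [((0, 8), 1), ((0, 2), C), ((0, 4), C), ((1, 8), 1), ((1, 2), C), ((1, 4), C),
   ((2, 9), 1), ((2, 0), C), ((2, 6), C), ((3, 9), 1), ((3, 0), C), ((3, 6), C)]

def outputWeights : List ((ℕ × ℕ) × ℝ) := [((0, 0), 1), ((0, 1), 1), ((0, 2), -1), ((0, 3), -1)]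

def mulWeights (C : ℝ) (K : ℕ) : ℕ → List ((ℕ × ℕ) × ℝ)
  | 0 => inputWeights
  | 1 => splitWeights C
  | i + 2 =>
    if i < K then tentWeights C
    else if i = K then readoutWeights C
    else if i = K + 1 then outputWeights
    else []

def mulBias (K : ℕ) : ℕ → List (ℕ × ℝ)
  | 0 => []
  | j + 1 => if j < K then tentBias j else []

def mulWidth (K i : ℕ) : ℕ := if i = 0 then 2 else if i = K + 4 then 1 else 10

def mulNet (C : ℝ) (K : ℕ) : ReluNet 2 1 :=
  .ofSparse (K + 3) (mulWidth K) rfl (by simp [mulWidth]) (mulWeights C K) (mulBias K)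

/-- The ten hidden units after `j` tent layers: two copies of each sawtooth channel
(one for each ReLU shift of the next layer) and the two running sums. -/
def tentState (C a p q : ℝ) (j r : ℕ) : ℝ :=
  [sawtooth j (a + p), sawtooth j (a + p), sawtooth j (a + q), sawtooth j (a + q),
   sawtooth j p, sawtooth j p, sawtooth j q, sawtooth j q,
   sawtoothAccum C (a + q) p j, sawtoothAccum C (a + p) q j].getD r 0

lemma sparseMulVec_splitWeights (C x y : ℝ) {r : ℕ} (hr : r < 10) :
    sparseMulVec (splitWeights C)
        (fun c => max (sparseMulVec inputWeights ([x, y].getD · 0) c - sparse [] c) 0) r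
      = tentState C (1 / 2 * max x 0) ((2 * C)⁻¹ * max y 0) ((2 * C)⁻¹ * max (-y) 0) 0 r := by
  interval_cases r <;>
    simp [sparseMulVec, splitWeights, inputWeights, tentState, sawtooth, sawtoothAccum]

lemma sparseMulVec_tentWeights (C a p q : ℝ) (j : ℕ) {r : ℕ} (hr : r < 10) :
    sparseMulVec (tentWeights C)
        (fun c => max (tentState C a p q j c - sparse (tentBias j) c) 0) r
      = tentState C a p q (j + 1) r := by
  interval_cases r <;>
    simp [sparseMulVec, tentWeights, tentBias, tentState, sawtooth, sawtoothAccum] <;> ring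

lemma sparseMulVec_readoutWeights (C a p q : ℝ) (j : ℕ) {r : ℕ} (hr : r < 10) :
    sparseMulVec (readoutWeights C) (fun c => max (tentState C a p q j c - sparse [] c) 0) r
      = [sawtoothAccum C (a + q) p (j + 1), sawtoothAccum C (a + q) p (j + 1),
          sawtoothAccum C (a + p) q (j + 1), sawtoothAccum C (a + p) q (j + 1)].getD r 0 := by
  interval_cases r <;> simp [sparseMulVec, readoutWeights, tentState, sawtoothAccum] <;> ring

lemma mulWidth_eq_ten {K i : ℕ} (h0 : i ≠ 0) (hK : i ≠ K + 4) : mulWidth K i = 10 := by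
  simp [mulWidth, h0, hK]

lemma col_lt_mulWidth (C : ℝ) (K i : ℕ) : ∀ e ∈ mulWeights C K i, e.1.2 < mulWidth K i := by
  match i with
  | 0 => simp [mulWeights, inputWeights, mulWidth]
  | 1 => simp [mulWeights, splitWeights, mulWidth]
  | i + 2 =>
    rcases eq_or_ne i (K + 2) with rfl | hi
    · simp [mulWeights]
    · rw [mulWidth_eq_ten (by omega) (by omega)]
      simp only [mulWeights]
      split_ifs <;> simp [tentWeights, readoutWeights, outputWeights]

lemma forward_mulNet (C x y : ℝ) {K j : ℕ} (hj : j ≤ K)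
    (r : Fin ((mulNet C K).width (j + 2))) :
    (mulNet C K).forward (fun k => ![x, y] (Fin.cast (mulNet C K).hin k)) (j + 2) r
      = tentState C (1 / 2 * max x 0) ((2 * C)⁻¹ * max y 0) ((2 * C)⁻¹ * max (-y) 0) j r := by
  have hr : r.val < 10 :=
    r.isLt.trans_eq (mulWidth_eq_ten (K := K) (i := j + 2) (by omega) (by omega))
  induction j with
  | zero =>
    have hinput : ∀ c, (mulNet C K).forward (fun k => ![x, y] (Fin.cast (mulNet C K).hin k)) 1 c
        = sparseMulVec inputWeights ([x, y].getD · 0) c :=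
      ReluNet.forward_ofSparse_one (fun c => by fin_cases c <;> rfl) (col_lt_mulWidth C K 0)
    exact (ReluNet.forward_ofSparse_add_two hinput (col_lt_mulWidth C K 1) r).trans
      (sparseMulVec_splitWeights C x y hr)
  | succ j ih =>
    have hprev := fun c => ih (by omega) c
      (c.isLt.trans_eq (mulWidth_eq_ten (K := K) (i := j + 2) (by omega) (by omega)))
    refine (ReluNet.forward_ofSparse_add_two hprev (col_lt_mulWidth C K (j + 2)) r).trans ?_
    simp only [mulWeights, mulBias, if_pos (show j < K by omega)]
    exact sparseMulVec_tentWeights _ _ _ _ j hr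

lemma eval_mulNet (C x y : ℝ) (K : ℕ) :
    (mulNet C K).eval ![x, y] 0
      = 2 * max (sawtoothAccum C (1 / 2 * max x 0 + (2 * C)⁻¹ * max (-y) 0)
            ((2 * C)⁻¹ * max y 0) (K + 1)) 0
        - 2 * max (sawtoothAccum C (1 / 2 * max x 0 + (2 * C)⁻¹ * max y 0)
            ((2 * C)⁻¹ * max (-y) 0) (K + 1)) 0 := by
  set a := 1 / 2 * max x 0
  set p := (2 * C)⁻¹ * max y 0
  set q := (2 * C)⁻¹ * max (-y) 0
  set readout := fun c => [sawtoothAccum C (a + q) p (K + 1), sawtoothAccum C (a + q) p (K + 1),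
    sawtoothAccum C (a + p) q (K + 1), sawtoothAccum C (a + p) q (K + 1)].getD c 0
  have hreadout : ∀ c,
      (mulNet C K).forward (fun k => ![x, y] (Fin.cast (mulNet C K).hin k)) (K + 3) c
        = readout c := by
    intro c
    refine (ReluNet.forward_ofSparse_add_two (fun c => forward_mulNet C x y le_rfl c)
      (col_lt_mulWidth C K (K + 2)) c).trans ?_
    simp only [mulWeights, mulBias, lt_irrefl, if_false, if_true]
    exact sparseMulVec_readoutWeights C a p q K
      (c.isLt.trans_eq (mulWidth_eq_ten (K := K) (i := K + 3) (by omega) (by omega)))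
  refine (ReluNet.forward_ofSparse_add_two hreadout (col_lt_mulWidth C K (K + 3)) _).trans ?_
  simp [readout, mulWeights, mulBias, sparseMulVec, outputWeights, two_mul, sub_eq_add_neg,
    add_assoc]

lemma eval_mulNet_zero_left (C y : ℝ) (K : ℕ) : (mulNet C K).eval ![0, y] 0 = 0 := by
  rw [eval_mulNet, max_self, mul_zero, zero_add, zero_add,
    sawtoothAccum_comm C ((2 * C)⁻¹ * max y 0), sub_self]

lemma eval_mulNet_zero_right (C x : ℝ) (K : ℕ) : (mulNet C K).eval ![x, 0] 0 = 0 := by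
  rw [eval_mulNet, neg_zero, sub_self]

lemma abs_eval_mulNet_sub_mul_le {C x y : ℝ} (hC : 1 ≤ C) (hx : x ∈ Set.Icc (0 : ℝ) 1)
    (hy : y ∈ Set.Icc (-C) C) (K : ℕ) :
    |(mulNet C K).eval ![x, y] 0 - x * y| ≤ C * (1 / 4) ^ K := by
  have hC0 : 0 < C := by linarith
  have hscaled : ∀ {t : ℝ}, 0 ≤ t → t ≤ C → (2 * C)⁻¹ * t ∈ Set.Icc (0 : ℝ) (1 / 2) :=
    fun h0 h1 => ⟨by positivity, by rw [inv_mul_le_iff₀ (by positivity)]; linarith⟩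
  obtain ⟨hp0, hp1⟩ := hscaled (le_max_right y 0) (max_le hy.2 hC0.le)
  obtain ⟨hq0, hq1⟩ := hscaled (le_max_right (-y) 0) (max_le (by linarith [hy.1]) hC0.le)
  obtain ⟨hx0, hx1⟩ := hx
  have hxy :
      x * y = 4 * C * (1 / 2 * x) * ((2 * C)⁻¹ * max y 0 - (2 * C)⁻¹ * max (-y) 0) := by
    rw [← mul_sub, max_zero_sub_max_neg_zero_eq_self]
    field_simp
    ring
  rw [eval_mulNet, max_eq_left hx0, max_eq_left (sawtoothAccum_nonneg hC0.le _ _ _),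
    max_eq_left (sawtoothAccum_nonneg hC0.le _ _ _), hxy]
  exact abs_two_mul_sawtoothAccum_sub_le (a := 1 / 2 * x) hC0.le ⟨by linarith, by linarith⟩
    ⟨by linarith, by linarith⟩ ⟨hp0, by linarith⟩ ⟨hq0, by linarith⟩ K

lemma nodup_mulWeights (C : ℝ) (K i : ℕ) : ((mulWeights C K i).map Prod.fst).Nodup := by
  match i with
  | 0 | 1 =>
    simp only [mulWeights, inputWeights, splitWeights, List.map_cons, List.map_nil]
    decide
  | i + 2 =>
    simp only [mulWeights]
    split_ifs <;>
      simp only [tentWeights, readoutWeights, outputWeights, List.map_cons, List.map_nil] <;> decide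

lemma abs_le_of_mem_mulWeights {C : ℝ} (hC : 1 ≤ C) (K i : ℕ) :
    ∀ e ∈ mulWeights C K i, |e.2| ≤ C := by
  have hCabs : |C| = C := abs_of_pos (by linarith)
  have hhalf : (2 : ℝ)⁻¹ ≤ C := by linarith
  have hinv : C⁻¹ * 2⁻¹ ≤ C := by
    nlinarith [inv_le_one_of_one_le₀ hC, inv_pos.2 (by linarith : 0 < C)]
  match i with
  | 0 | 1 => simp [mulWeights, inputWeights, splitWeights, hC, hCabs, hhalf, hinv]
  | i + 2 =>
    simp only [mulWeights]
    split_ifs <;> simp [tentWeights, readoutWeights, outputWeights, hC, hCabs, hhalf]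

lemma nodup_mulBias (K i : ℕ) : ((mulBias K i).map Prod.fst).Nodup := by
  match i with
  | 0 => simp [mulBias]
  | j + 1 => simp only [mulBias]; split_ifs <;> simp [tentBias]

lemma abs_le_of_mem_mulBias {C : ℝ} (hC : 1 ≤ C) (K i : ℕ) : ∀ e ∈ mulBias K i, |e.2| ≤ C := by
  match i with
  | 0 => simp [mulBias]
  | j + 1 =>
    have hshift : |(1 / 4 : ℝ) ^ j / 2| ≤ C := by
      rw [abs_of_nonneg (by positivity)]
      linarith [pow_le_one₀ (by norm_num : (0 : ℝ) ≤ 1 / 4) (by norm_num) (n := j)]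
    simp only [mulBias]
    split_ifs
    · intro e he
      simp only [tentBias, List.mem_cons, List.not_mem_nil, or_false] at he
      rcases he with rfl | rfl | rfl | rfl <;> exact hshift
    · simp

lemma paramBound_mulNet {C : ℝ} (hC : 1 ≤ C) (K : ℕ) : (mulNet C K).paramBound C :=
  ReluNet.paramBound_ofSparse (by linarith)
    (fun i _ => ⟨nodup_mulWeights C K i, abs_le_of_mem_mulWeights hC K i⟩)
    (fun i _ => ⟨nodup_mulBias K i, abs_le_of_mem_mulBias hC K i⟩)

lemma sum_length_mulWeights (C : ℝ) (K : ℕ) :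
    ∑ i ∈ range (K + 3 + 1), (mulWeights C K i).length = 22 * K + 31 := by
  have htent : ∀ i ∈ range K, (mulWeights C K (i + 1 + 1)).length = 22 := fun i hi => by
    simp [mulWeights, mem_range.1 hi, tentWeights]
  rw [sum_range_succ', sum_range_succ', sum_range_succ, sum_range_succ, sum_congr rfl htent]
  simp [mulWeights, readoutWeights, outputWeights, splitWeights, inputWeights, add_assoc,
    mul_comm]

lemma sum_length_mulBias (K : ℕ) : ∑ i ∈ range (K + 3), (mulBias K i).length = 4 * K := by
  have htent : ∀ i ∈ range K, (mulBias K (i + 1)).length = 4 := fun i hi => by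
    simp [mulBias, mem_range.1 hi, tentBias]
  rw [sum_range_succ', sum_range_succ, sum_range_succ, sum_congr rfl htent]
  simp [mulBias, mul_comm]

lemma sparsity_mulNet (C : ℝ) (K : ℕ) : (mulNet C K).sparsity ≤ 26 * K + 31 := by
  have hA := sum_length_mulWeights C K
  have hb := sum_length_mulBias K
  exact ReluNet.sparsity_ofSparse_le.trans (by omega)

end

lemma one_div_four_pow_le_two_zpow_neg {m K : ℕ} (h : m ≤ 2 * K) :
    (1 / 4 : ℝ) ^ K ≤ 2 ^ (-(m : ℤ)) := by
  rw [_root_.zpow_neg, zpow_natCast, one_div, inv_pow, show (4 : ℝ) ^ K = 2 ^ (2 * K) by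
    rw [pow_mul]; norm_num]
  exact inv_anti₀ (by positivity) (pow_le_pow_right₀ (by norm_num) h)

/-- Approximate multiplication by a ReLU network: for `C ≥ 1` and `m ∈ ℕ`, there is a
ReLU network with at most `m+8` hidden layers, all layer widths at most `12`, at most
`58 + 16m` nonzero parameters all bounded by `C`, computing `xy` on `[0,1] × [-C,C]`
up to error `C·2^{-m}`, and vanishing when either argument is `0`. -/
theorem mult_network_exists (C : ℝ) (hC : 1 ≤ C) (m : ℕ) :
    ∃ net : ReluNet 2 1,
      net.L ≤ m + 8 ∧
      (∀ i, i ≤ net.L + 1 → net.width i ≤ 12) ∧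
      net.sparsity ≤ 58 + 16 * m ∧
      net.paramBound C ∧
      (∀ x ∈ Set.Icc (0 : ℝ) 1, ∀ y ∈ Set.Icc (-C) C,
        |net.eval ![x, y] 0 - x * y| ≤ C * 2 ^ (-(m : ℤ))) ∧
      (∀ y : ℝ, net.eval ![0, y] 0 = 0) ∧
      (∀ x : ℝ, net.eval ![x, 0] 0 = 0) := by
  set K := (m + 1) / 2
  refine ⟨mulNet C K, ?_, fun i _ => ?_, (sparsity_mulNet C K).trans (by omega),
    paramBound_mulNet hC K, fun x hx y hy => (abs_eval_mulNet_sub_mul_le hC hx hy K).trans ?_,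
    fun y => eval_mulNet_zero_left C y K, fun x => eval_mulNet_zero_right C x K⟩
  · show K + 3 ≤ m + 8
    omega
  · show mulWidth K i ≤ 12
    unfold mulWidth
    split_ifs <;> omega
  · exact mul_le_mul_of_nonneg_left (one_div_four_pow_le_two_zpow_neg (by omega)) (by linarith)
end

section
/- Fix $m \in \mathbb{N}$ and define the error recursion $e_0(x) = \frac{1}{2x}$ and $e_{n+1}(x) = x\, e_n(x)^2 + 2^{-(m+1)}$ for $x > 0$. Let $\underline{k}, \overline{k} \in \mathbb{N}$ with $m > \overline{k}$, and let $n_0 = \lceil \log_2(\underline{k} + m + 2)\rceil$. Then for all $x \in [2^{-\underline{k}}, 2^{\overline{k}}]$, $e_{n_0}(x) \le 2^{-m}$. -/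
/-!
With `ε = 2^{-(m+1)}`, write `e_n(x) = 2^{-2^n}/x + d_n(x)`: the first term is the error of
exact Newton iteration, and the drift `d_n` collects the rounding errors. Each `d_n` is a
polynomial in `x` with nonnegative coefficients that is nonnegative, monotone and convex on
`[0, ∞)`, so `e_n` is convex on `(0, ∞)` and it suffices to bound it at the endpoints of the
interval. At `x = 1/(4ε)` the value `2ε` is a fixed point of the recursion. At the left endpoint
`a ≤ 1/2` the drift stays below `3ε/2` from the third step on, while `2^{-2^n}/a ≤ ε/2` once
`2^n ≥ k̲ + m + 2`.
-/

open Set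

noncomputable def newtonError (ε : ℝ) : ℕ → ℝ → ℝ
  | 0, x => 1 / (2 * x)
  | n + 1, x => x * newtonError ε n x ^ 2 + ε

noncomputable def newtonDrift (ε : ℝ) : ℕ → ℝ → ℝ
  | 0, _ => 0
  | n + 1, x => x * newtonDrift ε n x ^ 2 + 2 * 2⁻¹ ^ 2 ^ n * newtonDrift ε n x + ε

section

variable {ε : ℝ}

theorem newtonError_eq_add_newtonDrift {x : ℝ} (hx : x ≠ 0) (n : ℕ) :
    newtonError ε n x = 2⁻¹ ^ 2 ^ n / x + newtonDrift ε n x := by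
  induction n with
  | zero => simp [newtonError, newtonDrift, div_eq_inv_mul, mul_comm]
  | succ n ih =>
    rw [newtonError, newtonDrift, ih, pow_succ 2 n, pow_mul]
    field_simp
    ring

theorem newtonError_inv_four_mul (hε : 0 < ε) (n : ℕ) :
    newtonError ε n (4 * ε)⁻¹ = 2 * ε := by
  induction n with
  | zero => rw [newtonError]; field_simp; ring
  | succ n ih => rw [newtonError, ih]; field_simp; ring

theorem newtonDrift_nonneg (hε : 0 ≤ ε) {x : ℝ} (hx : 0 ≤ x) (n : ℕ) :
    0 ≤ newtonDrift ε n x := by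
  induction n with
  | zero => exact le_rfl
  | succ n ih => rw [newtonDrift]; positivity

theorem monotoneOn_newtonDrift (hε : 0 ≤ ε) (n : ℕ) : MonotoneOn (newtonDrift ε n) (Ici 0) := by
  induction n with
  | zero => exact monotoneOn_const
  | succ n ih =>
    intro x hx y hy hxy
    have hdx := newtonDrift_nonneg hε hx n
    have hd := ih hx hy hxy
    simp only [newtonDrift]
    gcongr

theorem convexOn_newtonDrift (hε : 0 ≤ ε) (n : ℕ) : ConvexOn ℝ (Ici 0) (newtonDrift ε n) := by
  induction n with
  | zero => exact convexOn_const 0 (convex_Ici 0)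
  | succ n ih =>
    have hd : ∀ ⦃x : ℝ⦄, x ∈ Ici 0 → 0 ≤ newtonDrift ε n x := fun x hx =>
      newtonDrift_nonneg hε hx n
    have hsq : ConvexOn ℝ (Ici 0) (newtonDrift ε n ^ 2) := ih.pow hd 2
    have hmul : ConvexOn ℝ (Ici 0) (id * newtonDrift ε n ^ 2) :=
      (convexOn_id (convex_Ici 0)).mul hsq (fun _ hx => hx) (fun _ _ => sq_nonneg _)
        (MonotoneOn.monovaryOn (monotone_id.monotoneOn _)
          fun x hx y hy hxy => pow_le_pow_left₀ (hd hx) (monotoneOn_newtonDrift hε n hx hy hxy) 2)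
    exact (hmul.add ((ih.smul (by positivity : (0 : ℝ) ≤ 2 * 2⁻¹ ^ 2 ^ n)).add
      (convexOn_const ε (convex_Ici 0)))).congr fun x _ => by
        simp only [newtonDrift, Pi.add_apply, Pi.mul_apply, Pi.pow_apply, id, smul_eq_mul]
        ring

theorem convexOn_newtonError (hε : 0 ≤ ε) (n : ℕ) : ConvexOn ℝ (Ioi 0) (newtonError ε n) := by
  have hinv : ConvexOn ℝ (Ioi 0) fun x : ℝ => x⁻¹ := by
    simpa only [zpow_neg_one] using convexOn_zpow (𝕜 := ℝ) (-1)
  refine ((hinv.smul (by positivity : (0 : ℝ) ≤ 2⁻¹ ^ 2 ^ n)).add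
    ((convexOn_newtonDrift hε n).subset Ioi_subset_Ici_self (convex_Ioi 0))).congr fun x hx => ?_
  simp only [Pi.add_apply, smul_eq_mul, newtonError_eq_add_newtonDrift (ne_of_gt hx),
    div_eq_mul_inv]

theorem newtonDrift_two_le (hε : 0 ≤ ε) (hε8 : ε ≤ 1 / 8) {x : ℝ} (hx2 : x ≤ 1 / 2) :
    newtonDrift ε 2 x ≤ 25 / 16 * ε := by
  simp only [newtonDrift]
  norm_num
  nlinarith [mul_le_mul hx2 (mul_le_mul_of_nonneg_left hε8 hε) (by positivity) (by norm_num)]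

theorem newtonDrift_succ_le (hε : 0 ≤ ε) (hε8 : ε ≤ 1 / 8) {x : ℝ} (hx : 0 ≤ x)
    (hx2 : x ≤ 1 / 2) {n : ℕ} (hn : 2 ≤ n) (hd : newtonDrift ε n x ≤ 25 / 16 * ε) :
    newtonDrift ε (n + 1) x ≤ 3 / 2 * ε := by
  have ht : (2⁻¹ : ℝ) ^ 2 ^ n ≤ 1 / 16 := calc
    (2⁻¹ : ℝ) ^ 2 ^ n ≤ 2⁻¹ ^ 2 ^ 2 :=
      pow_le_pow_of_le_one (by norm_num) (by norm_num) (Nat.pow_le_pow_right two_pos hn)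
    _ = 1 / 16 := by norm_num
  have hd0 := newtonDrift_nonneg hε hx n
  have hsq : newtonDrift ε n x ^ 2 ≤ (25 / 16 * ε) ^ 2 := pow_le_pow_left₀ hd0 hd 2
  simp only [newtonDrift]
  nlinarith [mul_le_mul hx2 hsq (sq_nonneg _) (by norm_num),
    mul_le_mul ht hd hd0 (by norm_num), mul_le_mul_of_nonneg_left hε8 hε]

theorem newtonDrift_le_of_three_le (hε : 0 ≤ ε) (hε8 : ε ≤ 1 / 8) {x : ℝ} (hx : 0 ≤ x)
    (hx2 : x ≤ 1 / 2) {n : ℕ} (hn : 3 ≤ n) : newtonDrift ε n x ≤ 3 / 2 * ε := by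
  have h : ∀ k, newtonDrift ε (k + 2) x ≤ 25 / 16 * ε := by
    intro k
    induction k with
    | zero => exact newtonDrift_two_le hε hε8 hx2
    | succ k ih => linarith [newtonDrift_succ_le hε hε8 hx hx2 (by omega) ih]
  obtain ⟨k, rfl⟩ : ∃ k, n = k + 2 + 1 := ⟨n - 3, by omega⟩
  exact newtonDrift_succ_le hε hε8 hx hx2 (by omega) (h k)

theorem newtonError_le_two_mul (hε : 0 < ε) (hε8 : ε ≤ 1 / 8) {a : ℝ} (ha : 0 < a)
    (ha2 : a ≤ 1 / 2) {n : ℕ} (hn : 3 ≤ n) (ht : (2⁻¹ : ℝ) ^ 2 ^ n ≤ a * ε / 2) {x : ℝ}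
    (hx : x ∈ Icc a (4 * ε)⁻¹) : newtonError ε n x ≤ 2 * ε := by
  have hleft : newtonError ε n a ≤ 2 * ε := by
    rw [newtonError_eq_add_newtonDrift ha.ne']
    have hfirst : (2⁻¹ : ℝ) ^ 2 ^ n / a ≤ ε / 2 := by
      rw [div_le_iff₀ ha]; linarith
    linarith [newtonDrift_le_of_three_le hε.le hε8 ha.le ha2 hn]
  have hright := newtonError_inv_four_mul hε n
  calc newtonError ε n x ≤ max (newtonError ε n a) (newtonError ε n (4 * ε)⁻¹) :=
        (convexOn_newtonError hε.le n).le_max_of_mem_Icc ha (ha.trans_le (hx.1.trans hx.2)) hx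
    _ ≤ 2 * ε := max_le hleft hright.le

end

/-- Convergence of the inexact Newton–Raphson error recursion
`e₀(x) = 1/(2x)`, `e_{n+1}(x) = x e_n(x)² + 2^{-(m+1)}`:
after `n₀ = ⌈log₂(k̲ + m + 2)⌉` steps, `e_{n₀}(x) ≤ 2^{-m}` on `[2^{-k̲}, 2^{k̄}]`,
provided `m > k̄`. -/
theorem newton_raphson_error (m uk ok : ℕ) (huk : 1 ≤ uk) (hok : 1 ≤ ok) (hm : ok < m)
    (e : ℕ → ℝ → ℝ)
    (he0 : ∀ x : ℝ, e 0 x = 1 / (2 * x))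
    (herec : ∀ (n : ℕ) (x : ℝ), e (n + 1) x = x * (e n x) ^ 2 + (2 : ℝ) ^ (-((m : ℤ) + 1))) :
    ∀ x ∈ Set.Icc ((2 : ℝ) ^ (-(uk : ℤ))) ((2 : ℝ) ^ (ok : ℤ)),
      e (Nat.clog 2 (uk + m + 2)) x ≤ (2 : ℝ) ^ (-(m : ℤ)) := by
  intro x hx
  have hpow (k : ℕ) : (2 : ℝ) ^ (-(k : ℤ)) = 2⁻¹ ^ k := by simp
  set ε : ℝ := 2⁻¹ ^ (m + 1) with hε
  have hrec : (2 : ℝ) ^ (-((m : ℤ) + 1)) = ε := by exact_mod_cast hpow (m + 1)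
  have he : e = newtonError ε := by
    funext n y
    induction n with
    | zero => rw [he0, newtonError]
    | succ n ih => rw [herec, ih, newtonError, hrec]
  set N := Nat.clog 2 (uk + m + 2)
  have hN : uk + m + 2 ≤ 2 ^ N := Nat.le_pow_clog one_lt_two _
  have hN3 : 3 ≤ N := (Nat.lt_clog_iff_pow_lt one_lt_two).mpr (by omega)
  have htwo : (2 : ℝ) ^ (-(m : ℤ)) = 2 * ε := by
    rw [hpow, hε]; ring
  rw [he, htwo]
  refine newtonError_le_two_mul (by positivity) ?_ (by positivity) ?_ hN3 ?_
    ⟨(hpow uk).symm.trans_le hx.1, ?_⟩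
  · rw [hε]
    calc (2⁻¹ : ℝ) ^ (m + 1) ≤ 2⁻¹ ^ 3 :=
          pow_le_pow_of_le_one (by norm_num) (by norm_num) (by omega)
      _ = 1 / 8 := by norm_num
  · calc (2⁻¹ : ℝ) ^ uk ≤ 2⁻¹ ^ 1 := pow_le_pow_of_le_one (by norm_num) (by norm_num) huk
      _ = 1 / 2 := by norm_num
  · calc (2⁻¹ : ℝ) ^ 2 ^ N ≤ 2⁻¹ ^ (uk + m + 2) :=
          pow_le_pow_of_le_one (by norm_num) (by norm_num) hN
      _ = 2⁻¹ ^ uk * ε / 2 := by rw [hε]; ring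
  · obtain ⟨j, rfl⟩ : ∃ j, m = j + 1 := ⟨m - 1, by omega⟩
    calc x ≤ 2 ^ ok := hx.2.trans_eq (zpow_natCast 2 ok)
      _ ≤ 2 ^ j := pow_le_pow_right₀ one_le_two (by omega)
      _ = (4 * ε)⁻¹ := by rw [hε, inv_pow]; field_simp; ring
end
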